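/- Let r, H > 0 and let C be the Godunov update for parameters r, H. Then C is nondecreasing in each argument: for all a, a', b, b' ∈ ℝ with a ≤ a' and b ≤ b', one has C(a, b) ≤ C(a', b') (monotonicity of the upwind scheme). -/
import Mathlib


/-- The Godunov update for parameters `r, H`: the two-sided quadratic branch when
`|a - b| < r * H`, and the one-sided upwind branch otherwise. -/
noncomputable def godunov (r H a b : ℝ) : ℝ :=
  if |a - b| < r * H then (a + b + Real.sqrt (2 * r ^ 2 * H ^ 2 - (a - b) ^ 2)) / 2
  else min a b + r * H

lemma godunov_comm (r H a b : ℝ) : godunov r H a b = godunov r H b a := by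
  unfold godunov
  rw [abs_sub_comm, min_comm, show (a - b) ^ 2 = (b - a) ^ 2 by ring, add_comm a b]

lemma godunov_mono_left (r H : ℝ) (hr : 0 < r) (hH : 0 < H)
    (a a' b : ℝ) (ha : a ≤ a') : godunov r H a b ≤ godunov r H a' b := by
  have hrH : 0 < r * H := mul_pos hr hH
  have hS : 2 * r ^ 2 * H ^ 2 = 2 * (r * H) ^ 2 := by ring
  unfold godunov
  by_cases h1 : |a - b| < r * H <;> by_cases h2 : |a' - b| < r * H <;>
    simp only [h1, h2, if_true, if_false]
  · -- both quadratic
    obtain ⟨hx1, hx2⟩ := abs_lt.mp h1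
    obtain ⟨hy1, hy2⟩ := abs_lt.mp h2
    set sa := Real.sqrt (2 * r ^ 2 * H ^ 2 - (a - b) ^ 2) with hsa
    set sb := Real.sqrt (2 * r ^ 2 * H ^ 2 - (a' - b) ^ 2) with hsb
    have hsa0 : 0 ≤ sa := Real.sqrt_nonneg _
    have hsb0 : 0 ≤ sb := Real.sqrt_nonneg _
    have hsa2 : sa ^ 2 = 2 * r ^ 2 * H ^ 2 - (a - b) ^ 2 := by
      rw [hsa, Real.sq_sqrt]; nlinarith
    have hsb2 : sb ^ 2 = 2 * r ^ 2 * H ^ 2 - (a' - b) ^ 2 := by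
      rw [hsb, Real.sq_sqrt]; nlinarith
    have hxa : a - b < sa := by nlinarith
    have hyb : a' - b < sb := by nlinarith
    have key : (0:ℝ) ≤ (a' - a) * (sa + sb - (a - b) - (a' - b)) :=
      mul_nonneg (by linarith) (by linarith)
    nlinarith [key, hsa2, hsb2]
  · -- quadratic to min branch
    obtain ⟨hx1, hx2⟩ := abs_lt.mp h1
    have hy : r * H ≤ a' - b := by
      rcases le_or_gt (r * H) (a' - b) with h | h
      · exact h
      · exfalso; apply h2; rw [abs_lt]; constructor <;> linarith
    have hmin : min a' b = b := min_eq_right (by linarith)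
    have hle : Real.sqrt (2 * r ^ 2 * H ^ 2 - (a - b) ^ 2) ≤ 2 * (r * H) - (a - b) := by
      have h4 : 2 * r ^ 2 * H ^ 2 - (a - b) ^ 2 ≤ (2 * (r * H) - (a - b)) ^ 2 := by
        nlinarith [sq_nonneg (r * H - (a - b))]
      calc Real.sqrt (2 * r ^ 2 * H ^ 2 - (a - b) ^ 2)
          ≤ Real.sqrt ((2 * (r * H) - (a - b)) ^ 2) := Real.sqrt_le_sqrt h4
        _ = 2 * (r * H) - (a - b) := Real.sqrt_sq (by linarith)
    rw [hmin]; linarith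
  · -- min branch to quadratic
    obtain ⟨hy1, hy2⟩ := abs_lt.mp h2
    have hx : a - b ≤ -(r * H) := by
      rcases le_or_gt (a - b) (-(r * H)) with h | h
      · exact h
      · exfalso; apply h1; rw [abs_lt]; constructor <;> linarith
    have hmin : min a b = a := min_eq_left (by linarith)
    set sb := Real.sqrt (2 * r ^ 2 * H ^ 2 - (a' - b) ^ 2) with hsb
    have hsb0 : 0 ≤ sb := Real.sqrt_nonneg _
    have hsb2 : sb ^ 2 = 2 * r ^ 2 * H ^ 2 - (a' - b) ^ 2 := by
      rw [hsb, Real.sq_sqrt]; nlinarith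
    have hgt : r * H < sb := by nlinarith
    rw [hmin]; linarith
  · -- both min
    have := min_le_min ha (le_refl b)
    linarith

/-- Monotonicity of the upwind scheme: the Godunov update is nondecreasing in each
argument. -/
theorem godunov_monotone (r H : ℝ) (hr : 0 < r) (hH : 0 < H)
    (a a' b b' : ℝ) (ha : a ≤ a') (hb : b ≤ b') :
    godunov r H a b ≤ godunov r H a' b' := by
  calc godunov r H a b ≤ godunov r H a' b := godunov_mono_left r H hr hH a a' b ha
    _ = godunov r H b a' := godunov_comm r H a' b
    _ ≤ godunov r H b' a' := godunov_mono_left r H hr hH b b' a' hb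
    _ = godunov r H a' b' := (godunov_comm r H a' b').symm
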